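/- Let 𝕍 be a persistence module over ℝ^n satisfying hypothesis (⋆) with respect to C̄. Let L, L′ ⊆ ℝ^n be lines with positive slope such that L ∼_C̄ L′. Then for all u ≺ v with u, v ∈ L and {c ∈ C̄ : c ≼ u} nonempty, one has ρ(u, v) = ρ(push_{L′}(ū), push_{L′}(v̄)). -/

import Mathlib

/-- `L ⊆ ℝⁿ` is a line with positive slope: `L = {u₀ + t·m : t ∈ ℝ}` with all
coordinates of the velocity vector `m` positive. -/
def PosLine {n : ℕ} (L : Set (Fin n → ℝ)) : Prop :=
  ∃ u₀ m : Fin n → ℝ, (∀ i, 0 < m i) ∧ L = {x | ∃ t : ℝ, x = u₀ + t • m}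

/-- For `∅ ≠ A ⊆ {1,…,n}`, the open face
`S_A(u) = {x : x_i = u_i for i ∈ A, x_j > u_j for j ∉ A}` of the boundary of
the positive cone of `u`. -/
def SFace {n : ℕ} (A : Finset (Fin n)) (u : Fin n → ℝ) : Set (Fin n → ℝ) :=
  {x | (∀ i ∈ A, x i = u i) ∧ ∀ j ∉ A, u j < x j}

/-- A persistence module over `ℝⁿ` (with the componentwise order) valued in
finite-dimensional `𝕜`-vector spaces: vector spaces `Vec u` and transition
maps `map : Vec u →ₗ Vec v` for `u ≼ v`, functorially. -/
structure PersistenceModule (n : ℕ) (𝕜 : Type) [Field 𝕜] where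
  Vec : (Fin n → ℝ) → Type
  [addCommGroup : ∀ u, AddCommGroup (Vec u)]
  [module : ∀ u, Module 𝕜 (Vec u)]
  [finiteDimensional : ∀ u, FiniteDimensional 𝕜 (Vec u)]
  map : ∀ {u v : Fin n → ℝ}, u ≤ v → (Vec u →ₗ[𝕜] Vec v)
  map_id : ∀ u : Fin n → ℝ, map (le_refl u) = LinearMap.id
  map_comp : ∀ {u v w : Fin n → ℝ} (h₁ : u ≤ v) (h₂ : v ≤ w),
    (map h₂).comp (map h₁) = map (h₁.trans h₂)

attribute [instance] PersistenceModule.addCommGroup PersistenceModule.module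
  PersistenceModule.finiteDimensional

/-- The rank invariant `ρ(u,v) = rank i^{u,v}` (by convention `0` if `u ≼ v`
fails). -/
noncomputable def rho {n : ℕ} {𝕜 : Type} [Field 𝕜] (M : PersistenceModule n 𝕜)
    (u v : Fin n → ℝ) : ℕ :=
  letI : Decidable (u ≤ v) := Classical.dec _
  if h : u ≤ v then Module.finrank 𝕜 (LinearMap.range (M.map h)) else 0

/-- Hypothesis (⋆) relative to a finite set `C̄ ⊆ ℝⁿ`: for all `u ≼ v`,
`ρ(u,v) = ρ(ū,v̄)` whenever `{c ∈ C̄ : c ≼ u}` is nonempty (`ū` denoting the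
greatest element of `{c ∈ C̄ : c ≼ u}`), and `ρ(u,v) = 0` otherwise. -/
def HypStar {n : ℕ} {𝕜 : Type} [Field 𝕜] (M : PersistenceModule n 𝕜)
    (Cbar : Finset (Fin n → ℝ)) : Prop :=
  ∀ u v : Fin n → ℝ, u ≤ v →
    (((∃ c ∈ Cbar, c ≤ u) →
      ∀ ub vb : Fin n → ℝ, IsGreatest {c | c ∈ Cbar ∧ c ≤ u} ub →
        IsGreatest {c | c ∈ Cbar ∧ c ≤ v} vb → rho M u v = rho M ub vb) ∧
      (¬ (∃ c ∈ Cbar, c ≤ u) → rho M u v = 0))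

/-!
Hypothesis (⋆) gives `ρ(u,v) = ρ(ū,v̄)`, so it suffices that `ū` is still the greatest element of
`C̄` below `push_{L'}(ū)` (and likewise for `v̄`); then (⋆) applied at `push_{L'}(ū) ≼ push_{L'}(v̄)`
gives the same value. If `c ∈ C̄` lies below `push_{L'}(b)` for some `b ∈ C̄`, then `d = b ⊔ c ∈ C̄`
has the same `L'`-push as `b` and shares with `b` a coordinate `i ∈ A^{L'}_b`; by `L ∼_C̄ L'`,
`i ∈ A^L_b ∩ A^L_d`, so `push_L(d)` and `push_L(b)` agree in coordinate `i` and hence coincide,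
as a line with positive slope is a graph over each coordinate. Thus `c ≼ push_L(b)`, and
`push_L(ū) ≼ u` for `u ∈ L`.
-/

section Push

variable {α : Type*} {L : Set α} {push : α → α}

lemma push_mono [Preorder α] (hpush : ∀ w, IsLeast {x | x ∈ L ∧ w ≤ x} (push w)) :
    Monotone push :=
  fun _ _ hab => (hpush _).2 ⟨(hpush _).1.1, hab.trans (hpush _).1.2⟩

lemma push_eq_of_le_of_le_push [PartialOrder α]
    (hpush : ∀ w, IsLeast {x | x ∈ L ∧ w ≤ x} (push w)) {b d : α} (hbd : b ≤ d)
    (hdb : d ≤ push b) : push d = push b :=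
  le_antisymm ((hpush d).2 ⟨(hpush b).1.1, hdb⟩) (push_mono hpush hbd)

end Push

lemma PosLine.eq_of_apply_eq {n : ℕ} {L : Set (Fin n → ℝ)} (hL : PosLine L)
    {x y : Fin n → ℝ} (hx : x ∈ L) (hy : y ∈ L) {i : Fin n} (h : x i = y i) : x = y := by
  obtain ⟨u₀, m, hm, rfl⟩ := hL
  obtain ⟨t, rfl⟩ := hx
  obtain ⟨s, rfl⟩ := hy
  have hts : t * m i = s * m i := by
    simpa only [Pi.add_apply, Pi.smul_apply, smul_eq_mul, add_right_inj] using h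
  rw [mul_right_cancel₀ (hm i).ne' hts]

section Faces

variable {n : ℕ} {L : Set (Fin n → ℝ)} {push : (Fin n → ℝ) → (Fin n → ℝ)}
  {A : (Fin n → ℝ) → Finset (Fin n)}

lemma push_eq_of_mem_face_of_apply_eq (hL : PosLine L)
    (hpush : ∀ w, IsLeast {x | x ∈ L ∧ w ≤ x} (push w))
    (hA : ∀ w, push w ∈ SFace (A w) w) {b d : Fin n → ℝ} {i : Fin n}
    (hib : i ∈ A b) (hid : i ∈ A d) (hdb : d i = b i) : push d = push b :=
  hL.eq_of_apply_eq (hpush d).1.1 (hpush b).1.1 <| by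
    rw [(hA d).1 i hid, (hA b).1 i hib, hdb]

lemma mem_face_of_push_eq (hA : ∀ w, push w ∈ SFace (A w) w) {b d : Fin n → ℝ} {i : Fin n}
    (hib : i ∈ A b) (hpush_eq : push d = push b) (hdb : d i = b i) : i ∈ A d := by
  by_contra hid
  have hlt := (hA d).2 i hid
  rw [hpush_eq, (hA b).1 i hib, hdb] at hlt
  exact lt_irrefl _ hlt

end Faces

section Equivalent

variable {n : ℕ} {Cbar : Finset (Fin n → ℝ)} {L L' : Set (Fin n → ℝ)}
  {pushL pushL' : (Fin n → ℝ) → (Fin n → ℝ)} {AL AL' : (Fin n → ℝ) → Finset (Fin n)}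

lemma le_push_of_le_push_of_equiv (hclosed : ∀ a ∈ Cbar, ∀ b ∈ Cbar, a ⊔ b ∈ Cbar)
    (hL : PosLine L)
    (hpush : ∀ w, IsLeast {x | x ∈ L ∧ w ≤ x} (pushL w))
    (hpush' : ∀ w, IsLeast {x | x ∈ L' ∧ w ≤ x} (pushL' w))
    (hAL : ∀ w, pushL w ∈ SFace (AL w) w)
    (hAL' : ∀ w, (AL' w).Nonempty ∧ pushL' w ∈ SFace (AL' w) w)
    (hequiv : ∀ c ∈ Cbar, AL c = AL' c) {b c : Fin n → ℝ} (hb : b ∈ Cbar) (hc : c ∈ Cbar)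
    (hcb : c ≤ pushL' b) : c ≤ pushL b := by
  set d := b ⊔ c
  have hd : d ∈ Cbar := hclosed b hb c hc
  have hpush'_eq : pushL' d = pushL' b :=
    push_eq_of_le_of_le_push hpush' le_sup_left (sup_le (hpush' b).1.2 hcb)
  obtain ⟨i, hib'⟩ := (hAL' b).1
  have hdb : d i = b i := by
    have hci : c i ≤ b i := (hcb i).trans ((hAL' b).2.1 i hib').le
    simp only [d, Pi.sup_apply, sup_eq_left.mpr hci]
  have hid' : i ∈ AL' d := mem_face_of_push_eq (fun w => (hAL' w).2) hib' hpush'_eq hdb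
  have hpush_eq : pushL d = pushL b :=
    push_eq_of_mem_face_of_apply_eq hL hpush hAL (hequiv b hb ▸ hib') (hequiv d hd ▸ hid') hdb
  calc c ≤ d := le_sup_right
    _ ≤ pushL d := (hpush d).1.2
    _ = pushL b := hpush_eq

lemma isGreatest_le_push_of_equiv (hclosed : ∀ a ∈ Cbar, ∀ b ∈ Cbar, a ⊔ b ∈ Cbar)
    (hL : PosLine L)
    (hpush : ∀ w, IsLeast {x | x ∈ L ∧ w ≤ x} (pushL w))
    (hpush' : ∀ w, IsLeast {x | x ∈ L' ∧ w ≤ x} (pushL' w))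
    (hAL : ∀ w, pushL w ∈ SFace (AL w) w)
    (hAL' : ∀ w, (AL' w).Nonempty ∧ pushL' w ∈ SFace (AL' w) w)
    (hequiv : ∀ c ∈ Cbar, AL c = AL' c) {w b : Fin n → ℝ} (hw : w ∈ L)
    (hb : IsGreatest {c | c ∈ Cbar ∧ c ≤ w} b) :
    IsGreatest {c | c ∈ Cbar ∧ c ≤ pushL' b} b := by
  refine ⟨⟨hb.1.1, (hpush' b).1.2⟩, fun c ⟨hc, hcb⟩ => hb.2 ⟨hc, ?_⟩⟩
  calc c ≤ pushL b :=
        le_push_of_le_push_of_equiv hclosed hL hpush hpush' hAL hAL' hequiv hb.1.1 hc hcb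
    _ ≤ w := (hpush b).2 ⟨hw, hb.1.2⟩

end Equivalent

lemma HypStar.rho_eq {n : ℕ} {𝕜 : Type} [Field 𝕜] {M : PersistenceModule n 𝕜}
    {Cbar : Finset (Fin n → ℝ)} (hstar : HypStar M Cbar) {u v ub vb : Fin n → ℝ} (huv : u ≤ v)
    (hub : IsGreatest {c | c ∈ Cbar ∧ c ≤ u} ub) (hvb : IsGreatest {c | c ∈ Cbar ∧ c ≤ v} vb) :
    rho M u v = rho M ub vb :=
  (hstar u v huv).1 ⟨ub, hub.1⟩ ub vb hub hvb

theorem stmt_16_general {n : ℕ} {𝕜 : Type} [Field 𝕜]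
    (M : PersistenceModule n 𝕜)
    (Cbar : Finset (Fin n → ℝ))
    (hclosed : ∀ a ∈ Cbar, ∀ b ∈ Cbar, a ⊔ b ∈ Cbar)
    (hstar : HypStar M Cbar)
    (L L' : Set (Fin n → ℝ)) (hL : PosLine L)
    (pushL pushL' : (Fin n → ℝ) → (Fin n → ℝ))
    (hpush : ∀ w : Fin n → ℝ, IsLeast {x | x ∈ L ∧ w ≤ x} (pushL w))
    (hpush' : ∀ w : Fin n → ℝ, IsLeast {x | x ∈ L' ∧ w ≤ x} (pushL' w))
    (AL AL' : (Fin n → ℝ) → Finset (Fin n))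
    (hAL : ∀ w : Fin n → ℝ, (AL w).Nonempty ∧ pushL w ∈ SFace (AL w) w)
    (hAL' : ∀ w : Fin n → ℝ, (AL' w).Nonempty ∧ pushL' w ∈ SFace (AL' w) w)
    (hequiv : ∀ c ∈ Cbar, AL c = AL' c)
    (u v : Fin n → ℝ) (huL : u ∈ L) (hvL : v ∈ L)
    (huv : ∀ i, u i < v i)
    (ubar vbar : Fin n → ℝ)
    (hubar : IsGreatest {c | c ∈ Cbar ∧ c ≤ u} ubar)
    (hvbar : IsGreatest {c | c ∈ Cbar ∧ c ≤ v} vbar) :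
    rho M u v = rho M (pushL' ubar) (pushL' vbar) := by
  have huv' : u ≤ v := fun i => (huv i).le
  have hubvb : ubar ≤ vbar := hvbar.2 ⟨hubar.1.1, hubar.1.2.trans huv'⟩
  have hAL₂ : ∀ w, pushL w ∈ SFace (AL w) w := fun w => (hAL w).2
  rw [hstar.rho_eq huv' hubar hvbar,
    hstar.rho_eq (push_mono hpush' hubvb)
      (isGreatest_le_push_of_equiv hclosed hL hpush hpush' hAL₂ hAL' hequiv huL hubar)
      (isGreatest_le_push_of_equiv hclosed hL hpush hpush' hAL₂ hAL' hequiv hvL hvbar)]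

/-- let `𝕍` be a persistence module over `ℝⁿ` satisfying
hypothesis (⋆) with respect to `C̄`, and `L ∼_C̄ L'` equivalent lines with
positive slope. Then for all `u ≺ v` on `L` with `{c ∈ C̄ : c ≼ u}` nonempty,
`ρ(u, v) = ρ(push_{L'}(ū), push_{L'}(v̄))`. -/
theorem stmt_16 {n : ℕ} (hn : 0 < n) {𝕜 : Type} [Field 𝕜]
    (M : PersistenceModule n 𝕜)
    (Cbar : Finset (Fin n → ℝ)) (hCne : Cbar.Nonempty)
    (hclosed : ∀ a ∈ Cbar, ∀ b ∈ Cbar, a ⊔ b ∈ Cbar)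
    (hstar : HypStar M Cbar)
    (L L' : Set (Fin n → ℝ)) (hL : PosLine L) (hL' : PosLine L')
    (pushL pushL' : (Fin n → ℝ) → (Fin n → ℝ))
    (hpush : ∀ w : Fin n → ℝ, IsLeast {x | x ∈ L ∧ w ≤ x} (pushL w))
    (hpush' : ∀ w : Fin n → ℝ, IsLeast {x | x ∈ L' ∧ w ≤ x} (pushL' w))
    (AL AL' : (Fin n → ℝ) → Finset (Fin n))
    (hAL : ∀ w : Fin n → ℝ, (AL w).Nonempty ∧ pushL w ∈ SFace (AL w) w)
    (hAL' : ∀ w : Fin n → ℝ, (AL' w).Nonempty ∧ pushL' w ∈ SFace (AL' w) w)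
    (hequiv : ∀ c ∈ Cbar, AL c = AL' c)
    (u v : Fin n → ℝ) (huL : u ∈ L) (hvL : v ∈ L)
    (huv : ∀ i, u i < v i)
    (ubar vbar : Fin n → ℝ)
    (hubar : IsGreatest {c | c ∈ Cbar ∧ c ≤ u} ubar)
    (hvbar : IsGreatest {c | c ∈ Cbar ∧ c ≤ v} vbar) :
    rho M u v = rho M (pushL' ubar) (pushL' vbar) :=
  stmt_16_general M Cbar hclosed hstar L L' hL pushL pushL' hpush hpush' AL AL' hAL hAL' hequiv u v
    huL hvL huv ubar vbar hubar hvbar
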